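/- arXiv:0901.4698 — 2 statements merged into one kernel-verified Lean document; each statement's English description precedes it below -/
import Mathlib

section
/- Define a(n,k) = qbinom(n,k)·r_{n-k}(x), where r_m is the Rogers-Szegő polynomial. With s(k) = q^k(x+1) and t(k) = q^k·x·(q^{k+1}-1), the sequence a(n,k) satisfies a(n,k) = a(n-1,k-1) + s(k)·a(n-1,k) + t(k)·a(n-1,k+1) for n ≥ 1 (with a(n-1,-1) interpreted as 0). -/
open Finset Matrix

/-- The q-integer `[n] = 1 + q + ... + q^(n-1)`. -/
def qint {R : Type*} [CommRing R] (q : R) (n : ℕ) : R := ∑ i ∈ Finset.range n, q ^ i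

/-- The q-factorial `[n]! = [1][2]⋯[n]`. -/
def qfact {R : Type*} [CommRing R] (q : R) (n : ℕ) : R := ∏ i ∈ Finset.range n, qint q (i + 1)

/-- The Gaussian binomial coefficient, via the q-Pascal recurrence. -/
def qbinom {R : Type*} [CommRing R] (q : R) : ℕ → ℕ → R
  | 0, 0 => 1
  | 0, _ + 1 => 0
  | _ + 1, 0 => 1
  | n + 1, k + 1 => qbinom q n k + q ^ (k + 1) * qbinom q n (k + 1)

/-- The q-Stirling numbers of the second kind:
`S[n,k] = S[n-1,k-1] + [k]·S[n-1,k]`, `S[0,k] = δ_{k0}`, `S[n,0] = δ_{n0}`. -/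
def qStirling2 {R : Type*} [CommRing R] (q : R) : ℕ → ℕ → R
  | 0, 0 => 1
  | 0, _ + 1 => 0
  | _ + 1, 0 => 0
  | n + 1, k + 1 => qStirling2 q n k + qint q (k + 1) * qStirling2 q n (k + 1)

/-- The q-Pochhammer symbol `(a;q)_m = ∏_{j<m} (1 - q^j a)`. -/
def qpoch {R : Type*} [CommRing R] (q a : R) (m : ℕ) : R := ∏ j ∈ Finset.range m, (1 - q ^ j * a)

section RSAux

variable {R : Type*} [CommRing R] (q : R)

lemma qbinom_zero_right (n : ℕ) : qbinom q n 0 = 1 := by cases n <;> rfl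

lemma qbinom_succ_succ (n k : ℕ) :
    qbinom q (n+1) (k+1) = qbinom q n k + q ^ (k+1) * qbinom q n (k+1) := rfl

lemma qbinom_eq_zero : ∀ n k : ℕ, n < k → qbinom q n k = 0 := by
  intro n
  induction n with
  | zero => intro k h; match k, h with | k+1, _ => rfl
  | succ n ih =>
    intro k h
    match k, h with
    | k+1, h =>
      rw [qbinom_succ_succ, ih k (by omega), ih (k+1) (by omega)]; ring

lemma qbinom_self : ∀ n : ℕ, qbinom q n n = 1 := by
  intro n
  induction n with
  | zero => rfl
  | succ n ih => rw [qbinom_succ_succ, ih, qbinom_eq_zero q n (n+1) (by omega)]; ring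

lemma qbinom_one : ∀ n : ℕ, qbinom q n 1 = qint q n := by
  intro n
  induction n with
  | zero => simp [qint, qbinom]
  | succ n ih =>
    rw [qbinom_succ_succ, qbinom_zero_right, ih]
    unfold qint
    rw [geom_sum_succ]; ring

lemma qint_mul (n : ℕ) : (q - 1) * qint q n = q ^ n - 1 := by
  unfold qint; rw [mul_comm, geom_sum_mul]

/-- Dual Pascal recurrence for the Gaussian binomial. -/
lemma qbinom_succ_succ' : ∀ n k : ℕ, qbinom q (n+1) (k+1)
    = qbinom q n (k+1) + q ^ (n-k) * qbinom q n k := by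
  intro n
  induction n with
  | zero =>
    intro k
    match k with
    | 0 => simp [qbinom, qbinom_succ_succ]
    | k+1 => simp [qbinom_eq_zero q 0 (k+1) (by omega), qbinom_eq_zero q 0 (k+2) (by omega),
        qbinom_eq_zero q 1 (k+2) (by omega)]
  | succ n ih =>
    intro k
    match k with
    | 0 =>
      rw [qbinom_succ_succ, qbinom_zero_right, qbinom_one, Nat.sub_zero]
      have e1 : (∑ i ∈ Finset.range (n+2), q ^ i) = q * (∑ i ∈ Finset.range (n+1), q^i) + 1 :=
        geom_sum_succ
      have e2 : (∑ i ∈ Finset.range (n+2), q ^ i) = q^(n+1) + ∑ i ∈ Finset.range (n+1), q^i :=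
        geom_sum_succ'
      unfold qint
      linear_combination e2 - e1
    | k+1 =>
      rcases Nat.lt_or_ge k n with h | h
      · obtain ⟨d, rfl⟩ : ∃ d, n = k + 1 + d := ⟨n - (k+1), by omega⟩
        have ha := ih k; have hb := ih (k+1)
        rw [show k+1+d - k = d+1 by omega] at ha
        rw [show k+1+d - (k+1) = d by omega] at hb
        rw [qbinom_succ_succ q (k+1+d+1) (k+1), show k+1+d+1 - (k+1) = d+1 by omega]
        linear_combination ha + q^(k+2) * hb - qbinom_succ_succ q (k+1+d) (k+1)
          - q^(d+1) * qbinom_succ_succ q (k+1+d) k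
      · rcases Nat.eq_or_lt_of_le h with rfl | h'
        · rw [qbinom_self, qbinom_self, qbinom_eq_zero q (n+1) (n+1+1) (by omega),
            Nat.sub_self]
          ring
        · rw [qbinom_eq_zero q (n+1) (k+1+1) (by omega),
            qbinom_eq_zero q (n+1+1) (k+1+1) (by omega),
            qbinom_eq_zero q (n+1) (k+1) (by omega)]
          ring

/-- The multiplicative "contiguous" relation `(q^(n-k)-1)·C(n,k) = (q^(k+1)-1)·C(n,k+1)`. -/
lemma qbinom_mul : ∀ n k : ℕ, (q ^ (n-k) - 1) * qbinom q n k
    = (q ^ (k+1) - 1) * qbinom q n (k+1) := by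
  intro n
  induction n with
  | zero =>
    intro k
    cases k with
    | zero => simp [qbinom]
    | succ k => simp [qbinom_eq_zero q 0 (k+1) (by omega), qbinom_eq_zero q 0 (k+2) (by omega)]
  | succ n ih =>
    intro k
    match k with
    | 0 =>
      rw [qbinom_zero_right, qbinom_one, Nat.sub_zero, ← qint_mul q (n+1)]; ring
    | k+1 =>
      rw [Nat.succ_sub_succ, qbinom_succ_succ, qbinom_succ_succ]
      rcases Nat.lt_or_ge k n with h | h
      · obtain ⟨d, rfl⟩ : ∃ d, n = k + 1 + d := ⟨n - (k+1), by omega⟩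
        have h1 := ih k; have h2 := ih (k+1)
        rw [show k+1+d - k = d+1 by omega] at h1
        rw [show k+1+d - (k+1) = d by omega] at h2
        rw [show k+1+d - k = d+1 by omega]
        linear_combination h1 + q^(k+2) * h2
      · rw [qbinom_eq_zero q n (k+1) (by omega), qbinom_eq_zero q n (k+2) (by omega),
          Nat.sub_eq_zero_of_le (by omega)]
        rcases Nat.eq_or_lt_of_le h with rfl | h'
        · ring
        · rw [qbinom_eq_zero q n k (by omega)]; ring

/-- The Rogers–Szegő polynomial (as a function of a ring element). -/
def rsz (q : R) (m : ℕ) (y : R) : R := ∑ j ∈ Finset.range (m+1), qbinom q m j * y ^ j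

lemma rsz_zero (y : R) : rsz q 0 y = 1 := by simp [rsz, qbinom]

/-- Functional equation from the Pascal recurrence. -/
lemma rsz_rec1 (m : ℕ) (y : R) :
    rsz q (m+1) y = y * rsz q m y + rsz q m (q*y) := by
  unfold rsz
  rw [Finset.sum_range_succ' (fun j => qbinom q (m+1) j * y ^ j) (m+1),
      Finset.sum_range_succ' (fun j => qbinom q m j * (q*y) ^ j) m,
      Finset.mul_sum]
  have hext : ∑ i ∈ Finset.range m, qbinom q m (i+1) * (q*y)^(i+1)
      = ∑ i ∈ Finset.range (m+1), qbinom q m (i+1) * (q*y)^(i+1) := by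
    rw [Finset.sum_range_succ, qbinom_eq_zero q m (m+1) (by omega)]
    ring
  simp only [hext, qbinom_zero_right, pow_zero]
  have : ∑ i ∈ Finset.range (m+1), qbinom q (m+1) (i+1) * y ^ (i+1)
      = ∑ i ∈ Finset.range (m+1),
        (y * (qbinom q m i * y ^ i) + qbinom q m (i+1) * (q*y)^(i+1)) := by
    refine Finset.sum_congr rfl fun i _ => ?_
    rw [qbinom_succ_succ, mul_pow]
    ring
  rw [this, Finset.sum_add_distrib]
  ring

/-- Functional equation from the dual Pascal recurrence. -/
lemma rsz_rec2 (m : ℕ) (y : R) :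
    rsz q (m+1) y = rsz q m y
      + y * ∑ j ∈ Finset.range (m+1), q^(m-j) * qbinom q m j * y ^ j := by
  unfold rsz
  rw [Finset.sum_range_succ' (fun j => qbinom q (m+1) j * y ^ j) (m+1),
      Finset.sum_range_succ' (fun j => qbinom q m j * y ^ j) m,
      Finset.mul_sum]
  have hext : ∑ i ∈ Finset.range m, qbinom q m (i+1) * y^(i+1)
      = ∑ i ∈ Finset.range (m+1), qbinom q m (i+1) * y^(i+1) := by
    rw [Finset.sum_range_succ, qbinom_eq_zero q m (m+1) (by omega)]
    ring
  simp only [hext, qbinom_zero_right, pow_zero]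
  have : ∑ i ∈ Finset.range (m+1), qbinom q (m+1) (i+1) * y ^ (i+1)
      = ∑ i ∈ Finset.range (m+1),
        (qbinom q m (i+1) * y^(i+1) + y * (q^(m-i) * qbinom q m i * y ^ i)) := by
    refine Finset.sum_congr rfl fun i _ => ?_
    rw [qbinom_succ_succ']
    ring
  rw [this, Finset.sum_add_distrib]
  ring

lemma rsz_scale (m : ℕ) (y : R) :
    ∑ j ∈ Finset.range (m+1), q^(m-j) * qbinom q m j * (q*y) ^ j
      = q^m * rsz q m y := by
  unfold rsz
  rw [Finset.mul_sum]
  refine Finset.sum_congr rfl fun j hj => ?_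
  rw [Finset.mem_range] at hj
  rw [mul_pow, ← mul_assoc,
    show q^(m-j) * qbinom q m j * q^j = q^(m-j) * q^j * qbinom q m j by ring,
    ← pow_add, show m - j + j = m by omega]
  ring

/-- The Rogers–Szegő three-term recurrence. -/
lemma rsz_rec (m : ℕ) (y : R) :
    rsz q (m+2) y = (1+y) * rsz q (m+1) y + (q^(m+1) - 1) * y * rsz q m y := by
  have h1 := rsz_rec1 q (m+1) y
  have h2 := rsz_rec2 q m (q*y)
  have h3 := rsz_scale q m y
  have h4 := rsz_rec1 q m y
  linear_combination h1 + h2 + q*y*h3 - h4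

end RSAux

/-- `a(n,k) = qbinom(n,k) r_(n-k)(x)` satisfies the three-term recurrence with
`s(k) = q^k (x+1)` and `t(k) = q^k x (q^(k+1) - 1)`. -/
theorem rogersSzego_orthogonality_recurrence {R : Type*} [CommRing R] (q x : R)
    (A : ℕ → ℕ → R)
    (hA : ∀ n k, A n k = qbinom q n k *
      ∑ j ∈ Finset.range (n - k + 1), qbinom q (n - k) j * x ^ j)
    (n k : ℕ) :
    A (n + 1) k = (if k = 0 then 0 else A n (k - 1)) +
      q ^ k * (x + 1) * A n k + q ^ k * x * (q ^ (k + 1) - 1) * A n (k + 1) := by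
  have hA' : ∀ n k, A n k = qbinom q n k * rsz q (n - k) x := hA
  rw [hA' (n+1) k, hA' n k, hA' n (k+1)]
  rcases k with _ | k'
  · rw [if_pos rfl, show (0:ℕ)+1 = 1 from rfl, pow_zero,
      qbinom_zero_right, qbinom_zero_right, qbinom_one]
    simp only [Nat.sub_zero]
    rcases n with _ | n'
    · rw [show (0:ℕ) + 1 - 1 = 0 by omega]
      rw [rsz_rec1, rsz_zero, rsz_zero]
      simp [qint]
    · rw [show n' + 1 - 1 = n' by omega]
      have hr := rsz_rec q n' x
      have hg := qint_mul q (n'+1)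
      linear_combination hr - x * rsz q n' x * hg
  · rw [if_neg (Nat.succ_ne_zero k'), Nat.add_sub_cancel, hA' n k']
    rcases Nat.lt_or_ge n (k'+1) with h | h
    · rcases Nat.eq_or_lt_of_le (show n ≤ k' by omega) with rfl | h'
      · rw [qbinom_self, qbinom_self, qbinom_eq_zero q n (n+1) (by omega),
          qbinom_eq_zero q n (n+1+1) (by omega), Nat.sub_self, Nat.sub_self]
        ring
      · rw [qbinom_eq_zero q (n+1) (k'+1) (by omega), qbinom_eq_zero q n k' (by omega),
          qbinom_eq_zero q n (k'+1) (by omega), qbinom_eq_zero q n (k'+1+1) (by omega)]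
        ring
    · obtain ⟨m, rfl⟩ : ∃ m, n = k' + 1 + m := ⟨n - (k'+1), by omega⟩
      rw [show k'+1+m+1 - (k'+1) = m+1 by omega, show k'+1+m - k' = m+1 by omega,
          show k'+1+m - (k'+1) = m by omega,
          qbinom_succ_succ q (k'+1+m) k']
      rcases m with _ | m''
      · rw [show k'+1+0 - (k'+1+1) = 0 by omega,
          qbinom_eq_zero q (k'+1+0) (k'+1+1) (by omega)]
        rw [rsz_rec1, rsz_zero, rsz_zero]
        ring
      · rw [show k'+1+(m''+1) - (k'+1+1) = m'' by omega]
        have hr := rsz_rec q m'' x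
        have hm := qbinom_mul q (k'+1+(m''+1)) (k'+1)
        rw [show k'+1+(m''+1) - (k'+1) = m''+1 by omega] at hm
        linear_combination (q^(k'+1) * qbinom q (k'+1+(m''+1)) (k'+1)) * hr
          + (q^(k'+1) * x * rsz q m'' x) * hm
end

section
/- The q-exponential polynomials satisfy the recurrence φ_{n+1}(x) = x · sum_{k=0}^n C(n,k) · q^k · φ_k(x/q). -/
open Finset Matrix

lemma qStirling2_eq_zero {R : Type*} [CommRing R] (q : R) :
    ∀ {n k : ℕ}, n < k → qStirling2 q n k = 0
  | 0, _+1, _ => rfl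
  | n+1, k+1, h => by
    rw [qStirling2, qStirling2_eq_zero q (by omega), qStirling2_eq_zero q (by omega)]; ring

lemma qint_succ {R : Type*} [CommRing R] (q : R) (n : ℕ) :
    qint q (n+1) = 1 + q * qint q n := by
  unfold qint
  rw [Finset.sum_range_succ', Finset.mul_sum]
  simp [pow_succ, mul_comm, add_comm]

lemma key {F : Type*} [Field F] (q : F) (n : ℕ) : ∀ j,
    ∑ k ∈ Finset.range (n+1), (n.choose k : F) * q^k * qStirling2 q k j
      = q^j * qStirling2 q (n+1) (j+1) := by
  induction n with
  | zero => intro j; cases j <;> simp [qStirling2, qint]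
  | succ n ih =>
    intro j
    have expand : ∑ k ∈ Finset.range (n+2), ((n+1).choose k : F) * q^k * qStirling2 q k j
        = (∑ k ∈ Finset.range (n+1), (n.choose k : F) * q^k * qStirling2 q k j)
          + q * ∑ k ∈ Finset.range (n+1), (n.choose k : F) * q^k * qStirling2 q (k+1) j := by
      rw [Finset.sum_range_succ' (fun k => ((n+1).choose k : F) * q^k * qStirling2 q k j)]
      have : ∀ k, ((n+1).choose (k+1) : F) = n.choose k + n.choose (k+1) := by
        intro k; rw [Nat.choose_succ_succ]; push_cast; ring
      simp only [this]
      have h2 : ∑ k ∈ Finset.range (n+1), ((n.choose k : F) + n.choose (k+1)) * q^(k+1) * qStirling2 q (k+1) j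
          = (∑ k ∈ Finset.range (n+1), (n.choose (k+1) : F) * q^(k+1) * qStirling2 q (k+1) j)
            + q * ∑ k ∈ Finset.range (n+1), (n.choose k : F) * q^k * qStirling2 q (k+1) j := by
        rw [Finset.mul_sum, ← Finset.sum_add_distrib]
        apply Finset.sum_congr rfl
        intro k _; ring
      rw [h2]
      have h3 : (∑ k ∈ Finset.range (n+1), (n.choose (k+1) : F) * q^(k+1) * qStirling2 q (k+1) j)
          + ((n+1).choose 0 : F) * q^0 * qStirling2 q 0 j
          = ∑ k ∈ Finset.range (n+1), (n.choose k : F) * q^k * qStirling2 q k j := by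
        rw [Finset.sum_range_succ' (fun k => (n.choose k : F) * q^k * qStirling2 q k j),
          Finset.sum_range_succ (fun k => (n.choose (k+1) : F) * q^(k+1) * qStirling2 q (k+1) j)]
        simp [Nat.choose_succ_self]
      linear_combination h3
    rw [expand, ih]
    cases j with
    | zero =>
      have : ∀ k, qStirling2 q (k+1) 0 = 0 := fun k => rfl
      simp only [this, mul_zero, Finset.sum_const_zero, mul_zero, add_zero]
      show q^0 * qStirling2 q (n+1) 1 = q^0 * qStirling2 q (n+2) 1
      rw [show qStirling2 q (n+2) 1 = qStirling2 q (n+1) 0 + qint q 1 * qStirling2 q (n+1) 1 from rfl]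
      simp [qStirling2, qint]
    | succ j =>
      have hs : ∀ k, qStirling2 q (k+1) (j+1)
          = qStirling2 q k j + qint q (j+1) * qStirling2 q k (j+1) := fun k => rfl
      simp only [hs]
      have split : ∑ k ∈ Finset.range (n+1), (n.choose k : F) * q^k *
          (qStirling2 q k j + qint q (j+1) * qStirling2 q k (j+1))
          = (∑ k ∈ Finset.range (n+1), (n.choose k : F) * q^k * qStirling2 q k j)
            + qint q (j+1) * ∑ k ∈ Finset.range (n+1), (n.choose k : F) * q^k * qStirling2 q k (j+1) := by
        rw [Finset.mul_sum, ← Finset.sum_add_distrib]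
        apply Finset.sum_congr rfl; intro k _; ring
      rw [split, ih, ih]
      rw [show qStirling2 q (n+2) (j+2)
          = qStirling2 q (n+1) (j+1) + qint q (j+2) * qStirling2 q (n+1) (j+2) from rfl,
        qint_succ q (j+1)]
      ring

/-- `φ_(n+1)(x) = x ∑_k C(n,k) q^k φ_k(x/q)`. -/
theorem qexp_binomial_recurrence {F : Type*} [Field F] (q : F) (hq : q ≠ 0) (x : F) (n : ℕ) :
    ∑ k ∈ Finset.range (n + 2), qStirling2 q (n + 1) k * x ^ k =
      x * ∑ k ∈ Finset.range (n + 1), (n.choose k : F) * q ^ k *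
        ∑ j ∈ Finset.range (k + 1), qStirling2 q k j * (x / q) ^ j := by
  -- extend inner sums
  have hext : ∀ k ∈ Finset.range (n+1),
      (n.choose k : F) * q ^ k * ∑ j ∈ Finset.range (k + 1), qStirling2 q k j * (x / q) ^ j
      = ∑ j ∈ Finset.range (n+1), (n.choose k : F) * q ^ k * (qStirling2 q k j * (x / q) ^ j) := by
    intro k hk
    rw [Finset.mul_sum]
    apply Finset.sum_subset
    · intro j hj; simp at hj hk ⊢; omega
    · intro j _ hj
      simp only [Finset.mem_range, not_lt] at hj
      rw [qStirling2_eq_zero q (by omega)]; ring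
  rw [Finset.sum_congr rfl hext, Finset.sum_comm]
  have hR : ∀ j ∈ Finset.range (n+1),
      ∑ k ∈ Finset.range (n+1), (n.choose k : F) * q ^ k * (qStirling2 q k j * (x / q) ^ j)
      = qStirling2 q (n+1) (j+1) * x ^ j := by
    intro j _
    have : ∑ k ∈ Finset.range (n+1), (n.choose k : F) * q ^ k * (qStirling2 q k j * (x / q) ^ j)
        = (x/q)^j * ∑ k ∈ Finset.range (n+1), (n.choose k : F) * q ^ k * qStirling2 q k j := by
      rw [Finset.mul_sum]; apply Finset.sum_congr rfl; intro k _; ring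
    rw [this, key, div_pow]
    field_simp
  rw [Finset.sum_congr rfl hR]
  rw [Finset.sum_range_succ' (fun k => qStirling2 q (n+1) k * x ^ k)]
  rw [show qStirling2 q (n+1) 0 = 0 from rfl]
  rw [Finset.mul_sum]
  simp only [pow_succ, zero_mul, add_zero]
  apply Finset.sum_congr rfl
  intro k _; ring
end
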